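/- arXiv:2307.03745 — 4 statements merged into one kernel-verified Lean document; each statement's English description precedes it below -/
import Mathlib

section
/- Let S = F[x_0,…,x_n] be a polynomial ring over a field F of characteristic p > 0, with homogeneous maximal ideal m = (x_0,…,x_n). Then for each q = p^e (e ≥ 0) and each integer N ≥ 0, the colon ideal satisfies m^{[q]} :_S m^N = m^{(n+1)q − n − N} + m^{[q]}, with the convention that m^i = S for i ≤ 0. -/
/-!
The monomials outside `m^{[q]} = (x_i^q)` are those in the box `a_i < q`, whose top degree is
`d (q - 1)` for `d` variables. A monomial `x^a` of the box can be multiplied by a monomial of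
degree `N` while staying in the box exactly when `deg a + N ≤ d (q - 1)`; so a polynomial
multiplies `m^N` into `m^{[q]}` iff each of its monomials lies in `m^{[q]}` or has degree
`> d (q - 1) - N`.
-/

namespace MvPolynomial

variable {σ R : Type*} [CommSemiring R]

variable (σ R) in
noncomputable abbrev idealOfVarPowers (q : ℕ) : Ideal (MvPolynomial σ R) :=
  .span (.range fun i => X i ^ q)

theorem mem_idealOfVarPowers_iff {q : ℕ} {f : MvPolynomial σ R} :
    f ∈ idealOfVarPowers σ R q ↔ ∀ a ∈ f.support, ∃ i, q ≤ a i := by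
  have hrange : (Set.range fun i => (X i : MvPolynomial σ R) ^ q) =
      (monomial · 1) '' Set.range fun i => Finsupp.single i q := by
    rw [← Set.range_comp]
    congr 1
    funext i
    exact X_pow_eq_monomial
  simp [idealOfVarPowers, hrange, mem_ideal_span_monomial_image, Finsupp.single_le_iff]

variable [Fintype σ]

theorem pow_idealOfVars_le_idealOfVarPowers {q K : ℕ} (hK : Fintype.card σ * (q - 1) < K) :
    idealOfVars σ R ^ K ≤ idealOfVarPowers σ R q := by
  intro f hf
  rw [mem_pow_idealOfVars_iff] at hf
  refine mem_idealOfVarPowers_iff.2 fun a ha => ?_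
  by_contra! hlt
  have hdeg : Finsupp.degree a ≤ Fintype.card σ * (q - 1) := by
    rw [Finsupp.degree_eq_sum]
    calc ∑ i, a i ≤ ∑ _i : σ, (q - 1) := Finset.sum_le_sum fun i _ => by have := hlt i; omega
      _ = Fintype.card σ * (q - 1) := by simp
  have := hf a ha
  omega

theorem exists_degree_eq_forall_add_lt {q N : ℕ} {a : σ →₀ ℕ} (haq : ∀ i, a i < q)
    (hN : Finsupp.degree a + N ≤ Fintype.card σ * (q - 1)) :
    ∃ b : σ →₀ ℕ, Finsupp.degree b = N ∧ ∀ i, a i + b i < q := by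
  set c : σ →₀ ℕ := Finsupp.equivFunOnFinite.symm fun _ => q - 1
  have hac : a ≤ c := fun i => by simpa [c] using Nat.le_sub_one_of_lt (haq i)
  have hc : Finsupp.degree c = Fintype.card σ * (q - 1) := by
    simp [c, Finsupp.degree_eq_sum]
  have hsplit : Finsupp.degree c = Finsupp.degree a + Finsupp.degree (c - a) := by
    rw [← map_add, add_tsub_cancel_of_le hac]
  obtain ⟨b, hb, hbN⟩ := Finsupp.exists_le_degree_eq (c - a) N (by omega)
  refine ⟨b, hbN, fun i => ?_⟩
  have hbi : b i ≤ q - 1 - a i := by simpa [c] using hb i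
  have := haq i
  omega

theorem le_degree_of_mem_idealOfVarPowers_colon {q N : ℕ} {f : MvPolynomial σ R}
    (hf : f ∈
      (idealOfVarPowers σ R q).colon (↑(idealOfVars σ R ^ N) : Set (MvPolynomial σ R)))
    {a : σ →₀ ℕ} (ha : a ∈ f.support) (haq : ∀ i, a i < q) :
    Fintype.card σ * (q - 1) + 1 - N ≤ Finsupp.degree a := by
  by_contra! hlt
  obtain ⟨b, hbN, hab⟩ := exists_degree_eq_forall_add_lt (N := N) haq (by omega)
  have hb : monomial b (1 : R) ∈ idealOfVars σ R ^ N := by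
    rw [pow_idealOfVars_eq_span]
    exact Ideal.subset_span ⟨b, hbN, rfl⟩
  have hab_mem : a + b ∈ (f * monomial b 1).support := by
    rw [mem_support_iff, coeff_mul_monomial, mul_one]
    exact mem_support_iff.1 ha
  obtain ⟨i, hi⟩ := mem_idealOfVarPowers_iff.1 (Submodule.mem_colon.1 hf _ hb) _ hab_mem
  exact (hab i).not_ge (by simpa using hi)

theorem idealOfVarPowers_colon_pow_idealOfVars (q N : ℕ) :
    (idealOfVarPowers σ R q).colon (↑(idealOfVars σ R ^ N) : Set (MvPolynomial σ R)) =
      idealOfVars σ R ^ (Fintype.card σ * (q - 1) + 1 - N) + idealOfVarPowers σ R q := by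
  apply le_antisymm
  · intro f hf
    rw [f.as_sum]
    refine Ideal.sum_mem _ fun a ha => ?_
    by_cases haq : ∃ i, q ≤ a i
    · refine Ideal.mem_sup_right (mem_idealOfVarPowers_iff.2 fun b hb => ?_)
      rwa [Finset.mem_singleton.1 (support_monomial_subset hb)]
    · push Not at haq
      exact Ideal.mem_sup_left <| (monomial_mem_pow_idealOfVars_iff _ _ (mem_support_iff.1 ha)).2
        (le_degree_of_mem_idealOfVarPowers_colon hf ha haq)
  · refine sup_le (fun f hf => Submodule.mem_colon.2 fun g hg => ?_)
      fun f hf => Submodule.mem_colon.2 fun g _ => Ideal.mul_mem_right _ _ hf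
    have hfg := Ideal.mul_mem_mul hf hg
    rw [← pow_add] at hfg
    exact pow_idealOfVars_le_idealOfVarPowers (by omega) hfg

end MvPolynomial

open MvPolynomial

theorem stmt_1_general {F : Type*} [Field F] (p : ℕ) (hp : p.Prime)
    (n e N : ℕ)
    (m mq : Ideal (MvPolynomial (Fin (n + 1)) F))
    (hm : m = Ideal.span (Set.range X))
    (hmq : mq = Ideal.span (Set.range fun i => X i ^ p ^ e)) :
    mq.colon (((m ^ N : Ideal (MvPolynomial (Fin (n + 1)) F))) : Set (MvPolynomial (Fin (n + 1)) F)) =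
      m ^ ((((n : ℤ) + 1) * (p : ℤ) ^ e - n - N).toNat) + mq := by
  subst hm hmq
  obtain ⟨r, hr⟩ : ∃ r, p ^ e = r + 1 := Nat.exists_eq_add_one.2 (pow_pos hp.pos e)
  have hexp : (((n : ℤ) + 1) * (p : ℤ) ^ e - n - N).toNat = (n + 1) * (p ^ e - 1) + 1 - N := by
    have hlin : ((n : ℤ) + 1) * (p : ℤ) ^ e - n - N = (((n + 1) * r : ℕ) : ℤ) + 1 - N := by
      rw [← Nat.cast_pow, hr]
      push_cast
      ring
    rw [hlin, hr, Nat.add_sub_cancel]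
    omega
  rw [hexp]
  simpa using idealOfVarPowers_colon_pow_idealOfVars (σ := Fin (n + 1)) (R := F) (p ^ e) N

/-- **Lemma 2.2.** Let `S = F[x_0, …, x_n]` over a field of characteristic `p > 0`, with
homogeneous maximal ideal `m`. For `q = p^e` and `N ≥ 0` one has
`m^{[q]} :_S m^N = m^((n+1)q - n - N) + m^{[q]}`, with the convention `m^i = S` for `i ≤ 0`. -/
theorem stmt_1 {F : Type*} [Field F] (p : ℕ) (hp : p.Prime) [CharP F p]
    (n e N : ℕ)
    (m mq : Ideal (MvPolynomial (Fin (n + 1)) F))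
    (hm : m = Ideal.span (Set.range X))
    (hmq : mq = Ideal.span (Set.range fun i => X i ^ p ^ e)) :
    mq.colon (((m ^ N : Ideal (MvPolynomial (Fin (n + 1)) F))) : Set (MvPolynomial (Fin (n + 1)) F)) =
      m ^ ((((n : ℤ) + 1) * (p : ℤ) ^ e - n - N).toNat) + mq :=
  stmt_1_general p hp n e N m mq hm hmq
end

section
/- Fix integers n ≥ 2 and d ≥ n+1, let F be a field of characteristic p > 0 where p is a prime with p ≡ −1 (mod d), and set f := x_0^d + ⋯ + x_n^d in S = F[x_0,…,x_n]. Then x_0^{np} belongs to the ideal (x_1^p, …, x_n^p, f^{n−1}) of S. -/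
/-!
Write `d * e = p + 1` and `b = x₁^d + ⋯ + xₙ^d`. Each `(xᵢ^d)^e = xᵢ · xᵢ^p` lies in
`J = (x₁^p, …, xₙ^p)`, so by pigeonhole `b^(n(e-1)+1) ∈ J`. Since `x₀^d = f - b` and
`f^(n-1)` lies in the ideal, the binomial expansion puts `x₀^(d(ne-1))` in it, and
`d(ne-1) = n(p+1) - d ≤ np` because `d ≥ n`.
-/

open MvPolynomial

namespace Ideal

variable {R : Type*} [CommRing R] (I : Ideal R)

theorem sum_pow_mem_of_forall_pow_mem {ι : Type*} (s : Finset ι) (y : ι → R) (k : ℕ)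
    (hy : ∀ i ∈ s, y i ^ (k + 1) ∈ I) : (∑ i ∈ s, y i) ^ (s.card * k + 1) ∈ I :=
  span_le.mpr (by rintro _ ⟨i, hi, rfl⟩; exact hy i hi) (sum_pow_mem_span_pow s y k)

theorem pow_mem_of_pow_eq_add {x a b : R} {d m k N : ℕ} (hx : x ^ d = a + b)
    (ha : a ^ m ∈ I) (hb : b ^ k ∈ I) (hN : d * (m + k - 1) ≤ N) : x ^ N ∈ I :=
  I.pow_mem_of_pow_mem (by rw [pow_mul, hx]; exact I.add_pow_add_pred_mem_of_pow_mem ha hb) hN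

end Ideal

theorem mul_add_pred_le_mul_of_succ_eq_mul {p n d k : ℕ} (hnd : n ≤ d) (hde : p + 1 = d * (k + 1)) :
    d * (n - 1 + (n * k + 1) - 1) ≤ n * p := by
  rw [Nat.add_sub_assoc le_add_self, Nat.add_sub_cancel]
  rcases n with _ | m
  · simp
  · have hsplit : d * (m + (m + 1) * k) + d = (m + 1) * p + (m + 1) := by
      linear_combination (m + 1) * hde.symm
    rw [Nat.add_sub_cancel]
    omega

theorem stmt_4_general {F : Type*} [Field F] (p n d : ℕ)
    (hd : n + 1 ≤ d) (hpd : (p + 1) % d = 0)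
    (f : MvPolynomial (Fin (n + 1)) F)
    (hf : f = ∑ i, X i ^ d) :
    X 0 ^ (n * p) ∈
      Ideal.span ((Set.range fun i : Fin n => X (i.succ) ^ p) ∪ {f ^ (n - 1)}) := by
  obtain ⟨e, hde⟩ := Nat.dvd_of_mod_eq_zero hpd
  obtain ⟨k, rfl⟩ : ∃ k, e = k + 1 := Nat.exists_eq_succ_of_ne_zero (by rintro rfl; simp at hde)
  set I := Ideal.span ((Set.range fun i : Fin n => X (i.succ) ^ p) ∪ {f ^ (n - 1)})
  have hfI : f ^ (n - 1) ∈ I := Ideal.subset_span (Or.inr rfl)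
  have hXI (i : Fin n) : X i.succ ^ (d * (k + 1)) ∈ I := by
    rw [← hde, pow_succ']
    exact I.mul_mem_left _ (Ideal.subset_span (Or.inl ⟨i, rfl⟩))
  have hbI : (-∑ i : Fin n, X i.succ ^ d) ^ (n * k + 1) ∈ I := by
    rw [neg_pow]
    refine I.mul_mem_left _ ?_
    have := I.sum_pow_mem_of_forall_pow_mem Finset.univ (fun i : Fin n => X i.succ ^ d) k
      fun i _ => by rw [← pow_mul]; exact hXI i
    rwa [Finset.card_univ, Fintype.card_fin] at this
  have hx0 : (X 0 : MvPolynomial (Fin (n + 1)) F) ^ d = f + -∑ i : Fin n, X i.succ ^ d := by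
    rw [hf, Fin.sum_univ_succ]; ring
  exact I.pow_mem_of_pow_eq_add hx0 hfI hbI (mul_add_pred_le_mul_of_succ_eq_mul (by omega) hde)

/-- **Example 3.2 (key computation).** Fix `n ≥ 2` and `d ≥ n+1`, let `F` have
characteristic `p` where `p` is prime with `p ≡ -1 (mod d)`, and set
`f := x_0^d + ⋯ + x_n^d` in `S = F[x_0, …, x_n]`. Then
`x_0^(n*p) ∈ (x_1^p, …, x_n^p, f^(n-1))`. -/
theorem stmt_4 {F : Type*} [Field F] (p n d : ℕ) (hp : p.Prime) [CharP F p]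
    (hn : 2 ≤ n) (hd : n + 1 ≤ d) (hpd : (p + 1) % d = 0)
    (f : MvPolynomial (Fin (n + 1)) F)
    (hf : f = ∑ i, X i ^ d) :
    X 0 ^ (n * p) ∈
      Ideal.span ((Set.range fun i : Fin n => X (i.succ) ^ p) ∪ {f ^ (n - 1)}) :=
  stmt_4_general p n d hd hpd f hf
end

section
/- Let p be a prime with p = 4k+1 for a positive integer k, let F be a field of characteristic p, and set f := x_0^4 + x_1^4 + x_2^4 in S = F[x_0, x_1, x_2]. Then f^{3k} does not belong to the ideal (x_0^p, x_1^p, x_2^p) of S. -/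
/-!
Writing `f = expand 4 (x_0 + x_1 + x_2)`, the coefficient of `x_0^{4k} x_1^{4k} x_2^{4k}` in
`f^{3k}` is the multinomial coefficient `(3k)! / (k!)^3`, which is prime to `p` because
`3k < p`. Every element of the monomial ideal `(x_0^p, x_1^p, x_2^p)` has zero coefficient at
this monomial, since `4k < p`.
-/

open MvPolynomial

theorem Nat.Prime.not_dvd_multinomial {α : Type*} {p : ℕ} (hp : p.Prime) {s : Finset α}
    {f : α → ℕ} (hf : ∑ i ∈ s, f i < p) : ¬ p ∣ Nat.multinomial s f := fun hdvd =>
  hf.not_ge <| hp.dvd_factorial.mp <| Nat.multinomial_spec s f ▸ hdvd.mul_left _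

namespace MvPolynomial

variable {σ R : Type*} [CommSemiring R]

theorem coeff_nsmul_sum_X_pow_pow [Fintype σ] {d : ℕ} (hd : d ≠ 0) (m : σ →₀ ℕ) (n : ℕ) :
    coeff (d • m) ((∑ i, X i ^ d : MvPolynomial σ R) ^ n) =
      if ∑ i, m i = n then (Nat.multinomial Finset.univ m : R) else 0 := by
  have hexpand : (∑ i, X i ^ d : MvPolynomial σ R) = expand d (∑ i, X i) := by simp
  rw [hexpand, ← map_pow, coeff_expand_smul d hd, coeff_sum_X_pow_of_fintype,
    Finsupp.sum_fintype _ _ (fun _ => rfl),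
    Finsupp.multinomial_eq_of_support_subset (Finset.subset_univ _), Nat.cast_ite, Nat.cast_zero]

theorem coeff_eq_zero_of_mem_ideal_span_X_pow {q : ℕ} {g : MvPolynomial σ R}
    (hg : g ∈ Ideal.span (Set.range fun i => X i ^ q)) {m : σ →₀ ℕ} (hm : ∀ i, m i < q) :
    coeff m g = 0 := by
  have hrange : (Set.range fun i => (X i ^ q : MvPolynomial σ R)) =
      (fun s => monomial s (1 : R)) '' Set.range fun i => Finsupp.single i q := by
    simp only [← Set.range_comp, Function.comp_def, X_pow_eq_monomial]
  rw [hrange, mem_ideal_span_monomial_image] at hg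
  by_contra hcoeff
  obtain ⟨_, ⟨i, rfl⟩, hle⟩ := hg m (mem_support_iff.mpr hcoeff)
  simpa using (hm i).trans_le (Finsupp.single_le_iff.mp hle)

end MvPolynomial

theorem stmt_6_general {F : Type*} [Field F] (p k : ℕ) (hpk : p = 4 * k + 1)
    (hp : p.Prime) [CharP F p]
    (f : MvPolynomial (Fin 3) F)
    (hf : f = X 0 ^ 4 + X 1 ^ 4 + X 2 ^ 4) :
    f ^ (3 * k) ∉ Ideal.span (Set.range fun i : Fin 3 => X i ^ p) := by
  intro hmem
  set m : Fin 3 →₀ ℕ := Finsupp.equivFunOnFinite.symm fun _ => k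
  have hsum : ∑ i, m i = 3 * k := by simp [m]
  have hcoeff : coeff (4 • m) (f ^ (3 * k)) = (Nat.multinomial Finset.univ m : F) := by
    rw [hf, ← Fin.sum_univ_three (fun i => (X i ^ 4 : MvPolynomial (Fin 3) F)),
      coeff_nsmul_sum_X_pow_pow four_ne_zero, if_pos hsum]
  have hvanish : coeff (4 • m) (f ^ (3 * k)) = 0 :=
    coeff_eq_zero_of_mem_ideal_span_X_pow hmem fun i => by simp [m]; omega
  exact hp.not_dvd_multinomial (by omega) <|
    (CharP.cast_eq_zero_iff F p _).mp (hcoeff ▸ hvanish)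

/-- **Example 4.3, case `p ≡ 1 mod 4`.** Let `p = 4k+1` be prime with `k ≥ 1`, let `F`
have characteristic `p`, and set `f := x_0^4 + x_1^4 + x_2^4` in `S = F[x_0, x_1, x_2]`.
Then `f^(3k) ∉ (x_0^p, x_1^p, x_2^p)`. -/
theorem stmt_6 {F : Type*} [Field F] (p k : ℕ) (hk : 1 ≤ k) (hpk : p = 4 * k + 1)
    (hp : p.Prime) [CharP F p]
    (f : MvPolynomial (Fin 3) F)
    (hf : f = X 0 ^ 4 + X 1 ^ 4 + X 2 ^ 4) :
    f ^ (3 * k) ∉ Ideal.span (Set.range fun i : Fin 3 => X i ^ p) :=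
  stmt_6_general p k hpk hp f hf
end

section
/- Let k ≥ 0 be an integer, let F be a field, and set f := x_0^4 + x_1^4 + x_2^4 in S = F[x_0, x_1, x_2]. Then f^{3k+1} belongs to the ideal (x_0^{4k+4}, x_1^{4k+4}, x_2^{4k+4}) of S. -/
open MvPolynomial

/- Pigeonhole: every monomial in the expansion of `(a₁ + ⋯ + aₙ)^(n k + 1)` contains some `aᵢ`
to a power `≥ k + 1`. For the three summands `xᵢ^4` this puts `f^(3k+1)` in `(xᵢ^(4k+4))`. -/

theorem Ideal.sum_pow_mem_span_range_pow {R ι : Type*} [CommSemiring R] [Fintype ι]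
    (a : ι → R) (k : ℕ) :
    (∑ i, a i) ^ (Fintype.card ι * k + 1) ∈ Ideal.span (Set.range fun i => a i ^ (k + 1)) := by
  simpa only [Set.image_univ, Finset.coe_univ, Finset.card_univ] using
    Ideal.sum_pow_mem_span_pow Finset.univ a k

theorem MvPolynomial.sum_X_pow_pow_mem_span_X_pow {R σ : Type*} [CommSemiring R] [Fintype σ]
    (d k : ℕ) :
    (∑ i, X i ^ d : MvPolynomial σ R) ^ (Fintype.card σ * k + 1) ∈
      Ideal.span (Set.range fun i : σ => X i ^ (d * k + d)) := by
  simpa only [← pow_mul, mul_add_one] using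
    Ideal.sum_pow_mem_span_range_pow (fun i => (X i ^ d : MvPolynomial σ R)) k

/-- **Example 4.3, case `p ≡ 3 mod 4` (ideal membership).** Let `k ≥ 0`, let `F` be a
field, and set `f := x_0^4 + x_1^4 + x_2^4` in `S = F[x_0, x_1, x_2]`. Then
`f^(3k+1) ∈ (x_0^(4k+4), x_1^(4k+4), x_2^(4k+4))`. -/
theorem stmt_7 {F : Type*} [Field F] (k : ℕ)
    (f : MvPolynomial (Fin 3) F)
    (hf : f = X 0 ^ 4 + X 1 ^ 4 + X 2 ^ 4) :
    f ^ (3 * k + 1) ∈ Ideal.span (Set.range fun i : Fin 3 => X i ^ (4 * k + 4)) := by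
  have h := sum_X_pow_pow_mem_span_X_pow (R := F) (σ := Fin 3) 4 k
  rwa [Fin.sum_univ_three, Fintype.card_fin, ← hf] at h
end
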